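/- Let G be a finite group with a shift structure ({X_j}, Y_0, φ) of depth ℓ, and fix j with -1 ≤ j < ℓ. Then there are group isomorphisms (X_j Y_0)/X_j* ≅ Y_0/(X_{j+1} ∩ Y_0) and (X_j Y_0)/X_j* ≅ (X_{j+1} Y_0)/X_{j+1}. -/
import Mathlib


/-- A finite group `G` has a *shift structure* `({X_j}, Y₀, φ)` of depth `ℓ ≥ 1`
(indices shifted by one, so `X j` here is the paper's `X_{j-1}`). -/
structure IsShiftStructure {G : Type*} [Group G] [Finite G] (ℓ : ℕ)
    (X : ℕ → Subgroup G) (Y0 : Subgroup G) [Y0.Normal] [(X 1).Normal]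
    (φ : (G ⧸ Y0) ≃* (G ⧸ X 1)) : Prop where
  one_le : 1 ≤ ℓ
  bot_eq : X 0 = ⊥
  top_eq : X (ℓ + 1) = ⊤
  mono : ∀ j, X j ≤ X (j + 1)
  norm : ∀ j, (X j).Normal
  compat : ∀ j ≤ ℓ,
    Subgroup.map φ.toMonoidHom (Subgroup.map (QuotientGroup.mk' Y0) (X j ⊔ Y0)) =
      Subgroup.map (QuotientGroup.mk' (X 1)) (X (j + 1))

/-- `QuotIso A N B M hN hM` says the quotient `A N / N` (the image of `A` in the ambient
quotient by the normal subgroup `N`) is isomorphic as a group to `B M / M`.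
When `N ≤ A` and `M ≤ B` this is exactly `A/N ≅ B/M`. -/
def QuotIso {G : Type*} [Group G] {H : Type*} [Group H]
    (A N : Subgroup G) (B M : Subgroup H) (hN : N.Normal) (hM : M.Normal) : Prop :=
  letI := hN
  letI := hM
  Nonempty (↥(Subgroup.map (QuotientGroup.mk' N) A) ≃* ↥(Subgroup.map (QuotientGroup.mk' M) B))

/-- The image of `A` in `G ⧸ N` is isomorphic to `A ⧸ (N.subgroupOf A)`. -/
noncomputable def mapMkEquiv {G : Type*} [Group G] (A N : Subgroup G) [N.Normal] :
    (A ⧸ N.subgroupOf A) ≃* ↥(Subgroup.map (QuotientGroup.mk' N) A) := by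
  have hker : ((QuotientGroup.mk' N).comp A.subtype).ker = N.subgroupOf A := by
    rw [← MonoidHom.comap_ker, QuotientGroup.ker_mk']; rfl
  have hrange : ((QuotientGroup.mk' N).comp A.subtype).range
      = Subgroup.map (QuotientGroup.mk' N) A := by
    rw [MonoidHom.range_comp, Subgroup.range_subtype]
  exact (QuotientGroup.quotientMulEquivOfEq hker.symm).trans
    ((QuotientGroup.quotientKerEquivRange _).trans (MulEquiv.subgroupCongr hrange))

lemma subgroupOf_eq_of_inf_eq {G : Type*} [Group G] {N M H : Subgroup G}
    (h : N ⊓ H = M ⊓ H) : N.subgroupOf H = M.subgroupOf H := by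
  ext x
  have := SetLike.ext_iff.mp h (x : G)
  simp only [Subgroup.mem_inf, x.2, and_true] at this
  simpa [Subgroup.mem_subgroupOf] using this

/-- Second isomorphism theorem at the level of images:
`(Y ⊔ N)/N ≅ Y/M` where `N ⊓ Y = M ⊓ Y`. -/
noncomputable def secondIsoImages {G : Type*} [Group G] (Y N M : Subgroup G)
    [N.Normal] [M.Normal] (hM : N ⊓ Y = M ⊓ Y) :
    ↥(Subgroup.map (QuotientGroup.mk' N) (Y ⊔ N)) ≃*
      ↥(Subgroup.map (QuotientGroup.mk' M) Y) :=
  ((mapMkEquiv (Y ⊔ N) N).symm.trans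
    ((QuotientGroup.quotientInfEquivProdNormalQuotient Y N).symm.trans
      ((QuotientGroup.quotientMulEquivOfEq (subgroupOf_eq_of_inf_eq hM)).trans
        (mapMkEquiv Y M))))

/-- fix `j` with `-1 ≤ j < ℓ` (here `k = j + 1 ≤ ℓ`, indices being shifted
by one).  Then `(X_j Y_0)/X_j* ≅ Y_0/(X_{j+1} ∩ Y_0)` and
`(X_j Y_0)/X_j* ≅ (X_{j+1} Y_0)/X_{j+1}`, where `X_j* = X_j (X_{j+1} ∩ Y_0)`. -/
theorem shift_structure_coset_isos {G : Type*} [Group G] [Finite G] (ℓ : ℕ)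
    (X : ℕ → Subgroup G) (Y0 : Subgroup G) [Y0.Normal] [(X 1).Normal]
    (φ : (G ⧸ Y0) ≃* (G ⧸ X 1)) (h : IsShiftStructure ℓ X Y0 φ) :
    ∀ k ≤ ℓ,
      ∃ (hstar : (X k ⊔ (X (k + 1) ⊓ Y0)).Normal)
        (hinf : (X (k + 1) ⊓ Y0).Normal),
        QuotIso (X k ⊔ Y0) (X k ⊔ (X (k + 1) ⊓ Y0)) Y0 (X (k + 1) ⊓ Y0)
          hstar hinf ∧
        QuotIso (X k ⊔ Y0) (X k ⊔ (X (k + 1) ⊓ Y0)) (X (k + 1) ⊔ Y0) (X (k + 1))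
          hstar (h.norm (k + 1)) := by
  intro k _
  haveI hA : (X k).Normal := h.norm k
  haveI hB : (X (k + 1)).Normal := h.norm (k + 1)
  haveI hinf : (X (k + 1) ⊓ Y0).Normal := Subgroup.normal_inf_normal _ _
  haveI hstar : (X k ⊔ (X (k + 1) ⊓ Y0)).Normal := Subgroup.sup_normal _ _
  have hstar_le : X k ⊔ (X (k + 1) ⊓ Y0) ≤ X (k + 1) :=
    sup_le (h.mono k) inf_le_left
  -- X* ⊓ Y0 = (X (k+1) ⊓ Y0) ⊓ Y0
  have hinf_eq : (X k ⊔ (X (k + 1) ⊓ Y0)) ⊓ Y0 = (X (k + 1) ⊓ Y0) ⊓ Y0 := by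
    rw [inf_assoc, inf_idem]
    exact le_antisymm (inf_le_inf_right _ hstar_le) (le_inf le_sup_right inf_le_right)
  -- X (k+1) ⊓ Y0 = (X (k+1) ⊓ Y0) ⊓ Y0
  have hinf_eq' : X (k + 1) ⊓ Y0 = (X (k + 1) ⊓ Y0) ⊓ Y0 := by
    rw [inf_assoc, inf_idem]
  -- X k ⊔ Y0 = Y0 ⊔ X*
  have hsup_eq : X k ⊔ Y0 = Y0 ⊔ (X k ⊔ (X (k + 1) ⊓ Y0)) := by
    refine le_antisymm (sup_le (le_sup_left.trans le_sup_right) le_sup_left)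
      (sup_le le_sup_right (sup_le le_sup_left (inf_le_right.trans le_sup_right)))
  have hsup_eq' : X (k + 1) ⊔ Y0 = Y0 ⊔ X (k + 1) := sup_comm _ _
  refine ⟨hstar, hinf, ?_, ?_⟩
  · rw [QuotIso, hsup_eq]
    exact ⟨secondIsoImages Y0 _ _ hinf_eq⟩
  · rw [QuotIso, hsup_eq, hsup_eq']
    exact ⟨(secondIsoImages Y0 _ _ hinf_eq).trans
      ((secondIsoImages Y0 (X (k + 1)) (X (k + 1) ⊓ Y0) hinf_eq').symm)⟩
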